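/- arXiv:2604.12799 — 2 statements merged into one kernel-verified Lean document; each statement's English description precedes it below -/
import Mathlib

section
/- Let n ≥ 2 and ε > 0. Fix nonnegative reals b₁,…,bₙ (bids on a single item), not all zero, and let B = Σᵢ bᵢ and B₋ᵢ = Σ_{i'≠i} b_{i'}. Define g(u) = u^(1+(n-1)ε) and, for each i with B₋ᵢ > 0, the payment pᵢ = B₋ᵢ · ( ∫₀^{bᵢ} g(t + B₋ᵢ)/(t + B₋ᵢ)² dt + g(B₋ᵢ)/((n-1)ε · B₋ᵢ) ). Then Σᵢ pᵢ = g(B)/ε. -/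
open Finset

theorem stmt_1 (n : ℕ) (hn : 2 ≤ n) (ε : ℝ) (hε : 0 < ε)
    (b : Fin n → ℝ) (hb : ∀ i, 0 ≤ b i) (hne : ∃ i, b i ≠ 0)
    (B : ℝ) (hB : B = ∑ i, b i)
    (Bm : Fin n → ℝ) (hBm : ∀ i, Bm i = ∑ i' ∈ univ.erase i, b i')
    (hBmpos : ∀ i, 0 < Bm i)
    (g : ℝ → ℝ) (hg : ∀ u, g u = u ^ (1 + ((n:ℝ) - 1) * ε))
    (p : Fin n → ℝ)
    (hp : ∀ i, p i = Bm i *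
      ((∫ t in (0:ℝ)..(b i), g (t + Bm i) / (t + Bm i) ^ 2)
        + g (Bm i) / ((((n:ℝ) - 1) * ε) * Bm i))) :
    ∑ i, p i = g B / ε := by
  set c : ℝ := ((n:ℝ) - 1) * ε with hcdef
  have hn1 : (1:ℝ) ≤ (n:ℝ) - 1 := by
    have : (2:ℝ) ≤ (n:ℝ) := by exact_mod_cast hn
    linarith
  have hc : 0 < c := by positivity
  have hBmsub : ∀ i, Bm i = B - b i := by
    intro i
    rw [hBm i, hB, Finset.sum_erase_eq_sub (Finset.mem_univ i)]
  have hBpos : 0 < B := by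
    have i0 : Fin n := ⟨0, by omega⟩
    have := hBmpos i0
    have hs := hBmsub i0
    have := hb i0
    linarith
  -- integral computation for each i
  have hint : ∀ i, (∫ t in (0:ℝ)..(b i), g (t + Bm i) / (t + Bm i) ^ 2)
      = (B ^ c - (Bm i) ^ c) / c := by
    intro i
    have ha : 0 < Bm i := hBmpos i
    have hbi : 0 ≤ b i := hb i
    have hcongr : (∫ t in (0:ℝ)..(b i), g (t + Bm i) / (t + Bm i) ^ 2)
        = ∫ t in (0:ℝ)..(b i), (t + Bm i) ^ (c - 1) := by
      apply intervalIntegral.integral_congr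
      intro t ht
      have ht0 : 0 ≤ t := by
        rcases Set.mem_uIcc.mp ht with h | h
        · exact h.1
        · linarith [h.1, hbi]
      have hpos : 0 < t + Bm i := by linarith
      simp only [hg]
      rw [show (t + Bm i) ^ 2 = (t + Bm i) ^ ((2:ℝ)) from (Real.rpow_two _).symm,
        ← Real.rpow_sub hpos]
      norm_num
      ring_nf
    rw [hcongr]
    rw [intervalIntegral.integral_comp_add_right (fun u => u ^ (c - 1)) (Bm i)]
    rw [integral_rpow (Or.inl (by linarith))]
    have : b i + Bm i = B := by rw [hBmsub i]; ring
    rw [this]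
    ring_nf
  have hpi : ∀ i, p i = Bm i * B ^ c / c := by
    intro i
    rw [hp i, hint i, hg]
    have ha : 0 < Bm i := hBmpos i
    have hBm1 : (Bm i) ^ (1 + c) = Bm i * (Bm i) ^ c := by
      rw [Real.rpow_add ha, Real.rpow_one]
    rw [hBm1]
    field_simp
    ring
  have hsumBm : ∑ i, Bm i = ((n:ℝ) - 1) * B := by
    have : ∑ i, Bm i = ∑ i : Fin n, (B - b i) := by
      exact Finset.sum_congr rfl fun i _ => hBmsub i
    rw [this, Finset.sum_sub_distrib, ← hB]
    simp [Finset.card_univ]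
    ring
  calc ∑ i, p i = ∑ i, Bm i * B ^ c / c := Finset.sum_congr rfl fun i _ => hpi i
    _ = (∑ i, Bm i) * B ^ c / c := by rw [← Finset.sum_div, ← Finset.sum_mul]
    _ = ((n:ℝ) - 1) * B * B ^ c / (((n:ℝ) - 1) * ε) := by rw [hsumBm]
    _ = B * B ^ c / ε := by
        field_simp
    _ = g B / ε := by
        rw [hg, Real.rpow_add hBpos, Real.rpow_one]
end

section
/- Let n ≥ 2, W ≥ 1, and ε ≥ 1/(n−1). Let b₁,…,bₙ ∈ [0, 1/n] be modified bids with Bⱼ := Σᵢ bᵢ ≤ 1, and let B₋ᵢ = Σ_{i'≠i} b_{i'} > 0. With g(u) = u^(1+(n-1)ε), the payment pᵢ = B₋ᵢ·( ∫₀^{bᵢ} g(t+B₋ᵢ)/(t+B₋ᵢ)² dt + g(B₋ᵢ)/((n-1)ε·B₋ᵢ) ) satisfies pᵢ ≤ bᵢ + 1/((n-1)ε). -/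
open Finset

theorem stmt_8 (n : ℕ) (hn : 2 ≤ n) (W : ℝ) (hW : 1 ≤ W)
    (ε : ℝ) (hε : 1 / ((n:ℝ) - 1) ≤ ε)
    (b : Fin n → ℝ) (hb : ∀ i, b i ∈ Set.Icc (0:ℝ) (1 / (n:ℝ)))
    (B : ℝ) (hB : B = ∑ i, b i) (hB1 : B ≤ 1)
    (i : Fin n)
    (Bm : ℝ) (hBm : Bm = ∑ i' ∈ univ.erase i, b i') (hBmpos : 0 < Bm)
    (g : ℝ → ℝ) (hg : ∀ u, g u = u ^ (1 + ((n:ℝ) - 1) * ε))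
    (p : ℝ)
    (hp : p = Bm *
      ((∫ t in (0:ℝ)..(b i), g (t + Bm) / (t + Bm) ^ 2)
        + g Bm / ((((n:ℝ) - 1) * ε) * Bm))) :
    p ≤ b i + 1 / (((n:ℝ) - 1) * ε) := by
  set α : ℝ := ((n:ℝ) - 1) * ε with hαdef
  have hn1 : (1:ℝ) ≤ (n:ℝ) - 1 := by
    have : (2:ℝ) ≤ (n:ℝ) := by exact_mod_cast hn
    linarith
  have hn1pos : (0:ℝ) < (n:ℝ) - 1 := by linarith
  have hα : (1:ℝ) ≤ α := by
    have h := mul_le_mul_of_nonneg_left hε hn1pos.le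
    rwa [mul_one_div, div_self hn1pos.ne'] at h
  have hαpos : (0:ℝ) < α := by linarith
  have hbi0 : 0 ≤ b i := (hb i).1
  have hBsplit : B = b i + Bm := by
    rw [hB, hBm, Finset.add_sum_erase univ b (mem_univ i)]
  have hsum1 : b i + Bm ≤ 1 := by linarith [hBsplit ▸ hB1]
  have hBm1 : Bm ≤ 1 := by linarith
  -- bound the integrand by 1 on [0, b i]
  have key : ∀ t ∈ Set.Icc (0:ℝ) (b i), g (t + Bm) / (t + Bm) ^ 2 ≤ 1 := by
    intro t ht
    obtain ⟨ht0, ht1⟩ := ht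
    have hpos : 0 < t + Bm := by linarith
    have hle1 : t + Bm ≤ 1 := by linarith
    rw [hg]
    rw [div_le_one (by positivity)]
    calc (t + Bm) ^ (1 + α) ≤ (t + Bm) ^ ((2:ℕ):ℝ) := by
          apply Real.rpow_le_rpow_of_exponent_ge hpos hle1
          push_cast; linarith
      _ = (t + Bm) ^ 2 := by rw [Real.rpow_natCast]
  have hnonneg : ∀ t ∈ Set.Icc (0:ℝ) (b i), 0 ≤ g (t + Bm) / (t + Bm) ^ 2 := by
    intro t ht
    have hpos : 0 < t + Bm := by linarith [ht.1]
    rw [hg]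
    positivity
  -- integrability
  have hcont : ContinuousOn (fun t => g (t + Bm) / (t + Bm) ^ 2) (Set.Icc (0:ℝ) (b i)) := by
    have hne : ∀ t ∈ Set.Icc (0:ℝ) (b i), t + Bm ≠ 0 := by
      intro t ht; have := ht.1; positivity
    have hc1 : ContinuousOn (fun t : ℝ => t + Bm) (Set.Icc (0:ℝ) (b i)) :=
      (continuous_id.add continuous_const).continuousOn
    have : ContinuousOn (fun t : ℝ => (t + Bm) ^ (1 + α) / (t + Bm) ^ 2)
        (Set.Icc (0:ℝ) (b i)) := by
      apply ContinuousOn.div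
      · exact hc1.rpow_const (fun t ht => Or.inl (hne t ht))
      · exact hc1.pow 2
      · intro t ht; exact pow_ne_zero 2 (hne t ht)
    refine this.congr ?_
    intro t ht; simp [hg]
  have hint : IntervalIntegrable (fun t => g (t + Bm) / (t + Bm) ^ 2)
      MeasureTheory.volume 0 (b i) := by
    apply ContinuousOn.intervalIntegrable
    rwa [Set.uIcc_of_le hbi0]
  have hI_le : (∫ t in (0:ℝ)..(b i), g (t + Bm) / (t + Bm) ^ 2) ≤ b i := by
    calc (∫ t in (0:ℝ)..(b i), g (t + Bm) / (t + Bm) ^ 2)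
        ≤ ∫ _ in (0:ℝ)..(b i), (1:ℝ) := by
          apply intervalIntegral.integral_mono_on hbi0 hint intervalIntegrable_const key
      _ = b i := by simp
  have hI_nonneg : 0 ≤ (∫ t in (0:ℝ)..(b i), g (t + Bm) / (t + Bm) ^ 2) :=
    intervalIntegral.integral_nonneg hbi0 hnonneg
  -- second term
  have hsecond : Bm * (g Bm / (α * Bm)) ≤ 1 / α := by
    rw [hg]
    have : Bm * (Bm ^ (1 + α) / (α * Bm)) = Bm ^ (1 + α) / α := by
      field_simp
    rw [this]
    gcongr
    exact Real.rpow_le_one hBmpos.le hBm1 (by linarith)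
  -- combine
  have hBmI : Bm * (∫ t in (0:ℝ)..(b i), g (t + Bm) / (t + Bm) ^ 2) ≤ b i := by
    calc Bm * (∫ t in (0:ℝ)..(b i), g (t + Bm) / (t + Bm) ^ 2)
        ≤ 1 * (∫ t in (0:ℝ)..(b i), g (t + Bm) / (t + Bm) ^ 2) := by
          gcongr
      _ = _ := one_mul _
      _ ≤ b i := hI_le
  rw [hp, mul_add]
  linarith
end
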